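/- (Projection maximizes the generalized Hilbert metric) Let V be a complete subsemimodule of a complete right K-semimodule X, and x ∈ X. Then for every v ∈ V, d_H(x,v) ≤ d_H(x, P_V(x)), where d_H(x,y) = (x\y)(y\x) and P_V(x) = max{w ∈ V : w ≤ x}. -/

import Mathlib

/-!
Write `p = P_V(x)`. Since `p ≤ x`, we have `1 ≤ p\x`. For `v ∈ V`, the element `v·(v\x)` lies in
`V` and below `x`, hence below `p`; so `(x\v)(v\x) ≤ x\(v·(v\x)) ≤ x\p ≤ (x\p)(p\x)`.
-/

variable {K : Type*} [CompleteLattice K] [Monoid K]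
variable {X : Type*} [CompleteLattice X]

/-- Residual of the action: x\y = ⊔ {l : K | x·l ≤ y}. -/
def lres (act : X → K → X) (x y : X) : K := sSup {l : K | act x l ≤ y}

/-- Canonical projector onto a sup-closed subset V: P_V(x) = ⊔ {v ∈ V | v ≤ x}. -/
def proj (V : Set X) (x : X) : X := sSup {v : X | v ∈ V ∧ v ≤ x}

theorem monotone_of_map_sSup {α β : Type*} [CompleteLattice α] [CompleteLattice β] {f : α → β}
    (hf : ∀ S : Set α, f (sSup S) = ⨆ a ∈ S, f a) : Monotone f := by
  intro a b hab
  have hpair := hf {a, b}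
  rw [sSup_pair, sup_eq_right.2 hab] at hpair
  rw [hpair]
  exact le_iSup₂_of_le a (by simp) le_rfl

section Residual

variable (act : X → K → X)

theorem lres_mono_right {x y z : X} (h : y ≤ z) : lres act x y ≤ lres act x z :=
  sSup_le_sSup fun _ hl => le_trans hl h

theorem act_lres_le (hsupS : ∀ (x : X) (S : Set K), act x (sSup S) = ⨆ a ∈ S, act x a)
    (x y : X) : act x (lres act x y) ≤ y := by
  rw [lres, hsupS]
  exact iSup₂_le fun _ h => h

theorem lres_mul_le_lres_act (hassoc : ∀ (x : X) (a b : K), act (act x a) b = act x (a * b))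
    (hsupS : ∀ (x : X) (S : Set K), act x (sSup S) = ⨆ a ∈ S, act x a)
    (hsupV : ∀ (U : Set X) (a : K), act (sSup U) a = ⨆ x ∈ U, act x a)
    (x y : X) (a : K) : lres act x y * a ≤ lres act x (act y a) := by
  refine le_sSup (show act x (lres act x y * a) ≤ act y a from ?_)
  rw [← hassoc]
  exact monotone_of_map_sSup (f := fun z => act z a) (hsupV · a) (act_lres_le act hsupS x y)

theorem proj_le (V : Set X) (x : X) : proj V x ≤ x :=
  sSup_le fun _ hv => hv.2

theorem act_lres_le_proj (hsupS : ∀ (x : X) (S : Set K), act x (sSup S) = ⨆ a ∈ S, act x a)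
    {V : Set X} (hVact : ∀ v ∈ V, ∀ a : K, act v a ∈ V) {v : X} (hv : v ∈ V) (x : X) :
    act v (lres act v x) ≤ proj V x :=
  le_sSup ⟨hVact v hv _, act_lres_le act hsupS v x⟩

theorem one_le_lres_proj (hone : ∀ x : X, act x 1 = x) (V : Set X) (x : X) :
    1 ≤ lres act (proj V x) x :=
  le_sSup (show act (proj V x) 1 ≤ x by rw [hone]; exact proj_le V x)

end Residual

theorem hilbert_projection_maximizes_general
    (act : X → K → X)
    (hKl : ∀ (a : K) (S : Set K), a * sSup S = ⨆ b ∈ S, a * b)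
    (hassoc : ∀ (x : X) (a b : K), act (act x a) b = act x (a * b))
    (hone : ∀ x : X, act x 1 = x)
    (hsupS : ∀ (x : X) (S : Set K), act x (sSup S) = ⨆ a ∈ S, act x a)
    (hsupV : ∀ (U : Set X) (a : K), act (sSup U) a = ⨆ x ∈ U, act x a)
    (V : Set X)
    (hVact : ∀ v ∈ V, ∀ a : K, act v a ∈ V)
    (x : X) :
    ∀ v ∈ V, lres act x v * lres act v x ≤
      lres act x (proj V x) * lres act (proj V x) x := by
  intro v hv
  calc lres act x v * lres act v x
      ≤ lres act x (act v (lres act v x)) := lres_mul_le_lres_act act hassoc hsupS hsupV x v _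
    _ ≤ lres act x (proj V x) := lres_mono_right act (act_lres_le_proj act hsupS hVact hv x)
    _ = lres act x (proj V x) * 1 := (mul_one _).symm
    _ ≤ lres act x (proj V x) * lres act (proj V x) x :=
        monotone_of_map_sSup (hKl _) (one_le_lres_proj act hone V x)

/-- Projection maximizes the generalized Hilbert metric:
d_H(x,v) ≤ d_H(x,P_V(x)) for all v ∈ V. -/
theorem hilbert_projection_maximizes
    (act : X → K → X)
    (hKl : ∀ (a : K) (S : Set K), a * sSup S = ⨆ b ∈ S, a * b)
    (hKr : ∀ (a : K) (S : Set K), sSup S * a = ⨆ b ∈ S, b * a)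
    (hassoc : ∀ (x : X) (a b : K), act (act x a) b = act x (a * b))
    (hone : ∀ x : X, act x 1 = x)
    (hsupS : ∀ (x : X) (S : Set K), act x (sSup S) = ⨆ a ∈ S, act x a)
    (hsupV : ∀ (U : Set X) (a : K), act (sSup U) a = ⨆ x ∈ U, act x a)
    (V : Set X)
    (hVsup : ∀ U : Set X, U ⊆ V → sSup U ∈ V)
    (hVact : ∀ v ∈ V, ∀ a : K, act v a ∈ V)
    (x : X) :
    ∀ v ∈ V, lres act x v * lres act v x ≤
      lres act x (proj V x) * lres act (proj V x) x :=
  hilbert_projection_maximizes_general act hKl hassoc hone hsupS hsupV V hVact x
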